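/- If V is a Bellman fixed point, then for every state s < c_N merging is the unique optimal action: V(s) = Q_V(s, s) = G(s) + γ ∫₀^∞ f(x) V(s + x) dx, and Q_V(s, s) > Q_V(s, a) for every non-merging action a < s. -/

import Mathlib

/-!
Put `Q a := G a - G 0 + γ ∫ f(x) V(a + x) dx`. The Bellman equation gives `Q a ≤ V z` whenever
`a < z` and `a < t₀`, since `a` is then a non-merging action at `z`; as the merge value at `y` is
`Q y + G 0`, this yields `V y ≤ V z + G 0` for all `y < z`. Averaging over the jump,
`Q a ≤ G a - G 0 + γ (I s + G 0)` for `a < s`, where `I s := ∫ f(x) V(s + x) dx`, and this is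
below the merge value `G s + γ I s` at `s` because `G a < G s` on the increasing branch and
`γ G 0 < G 0`.
-/

open MeasureTheory Set Filter

theorem integral_mul_le_integral_mul_add {α : Type*} [MeasurableSpace α] {μ : Measure α}
    {f u v : α → ℝ} {c : ℝ} (hf : Integrable f μ) (hf1 : ∫ x, f x ∂μ = 1)
    (hf0 : ∀ᵐ x ∂μ, 0 ≤ f x) (hu : Integrable (fun x => f x * u x) μ)
    (hv : Integrable (fun x => f x * v x) μ) (huv : ∀ᵐ x ∂μ, u x ≤ v x + c) :
    ∫ x, f x * u x ∂μ ≤ ∫ x, f x * v x ∂μ + c := by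
  have h : ∫ x, f x * u x ∂μ ≤ ∫ x, (f x * v x + f x * c) ∂μ := by
    refine integral_mono_ae hu (hv.add (hf.mul_const c)) ?_
    filter_upwards [hf0, huv] with x hfx hx
    rw [← mul_add]
    exact mul_le_mul_of_nonneg_left hx hfx
  rwa [integral_add hv (hf.mul_const c), integral_mul_const, hf1, one_mul] at h

theorem integrableOn_Ioi_mul_comp_const_add {f V : ℝ → ℝ} {c : ℝ}
    (hf : IntegrableOn f (Ioi 0)) (hV : Measurable V)
    (hVub : BddAbove (V '' Ici c)) (hVlb : BddBelow (V '' Ici c)) :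
    IntegrableOn (fun x => f x * V (c + x)) (Ioi 0) := by
  obtain ⟨U, hU⟩ := hVub
  obtain ⟨L, hL⟩ := hVlb
  refine hf.mul_bdd (c := max |L| |U|) (hV.comp (measurable_const_add c)).aestronglyMeasurable
    ((ae_restrict_iff' measurableSet_Ioi).mpr (ae_of_all _ fun x hx => ?_))
  have hcx : V (c + x) ∈ V '' Ici c := mem_image_of_mem V (by simpa using le_of_lt hx)
  exact abs_le_max_abs_abs (hL hcx) (hU hcx)

theorem le_of_strictMonoOn_Iic_of_strictAntiOn_Ico {G : ℝ → ℝ} {c t a : ℝ}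
    (hinc : StrictMonoOn G (Iic c)) (hdec : StrictAntiOn G (Ico c t)) (hct : c < t)
    (hat : a < t) : G a ≤ G c := by
  rcases le_or_gt a c with hac | hca
  · exact hinc.monotoneOn hac (le_refl c) hac
  · exact (hdec (left_mem_Ico.mpr hct) ⟨hca.le, hat⟩ hca).le

theorem setOf_lt_and_lt_nonempty (y t : ℝ) : {a : ℝ | a < y ∧ a < t}.Nonempty :=
  ⟨min y t - 1, by linarith [min_le_left y t], by linarith [min_le_right y t]⟩

/-- `M s` is the value of merging at `s`, and `Q a` that of the non-merging action `a`. -/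
def IsBellmanFixedPoint (t₀ : ℝ) (M Q V : ℝ → ℝ) : Prop :=
  ∀ s, V s = if s < t₀ then max (M s) (sSup (Q '' {a | a < s ∧ a < t₀}))
    else sSup (Q '' Iio t₀)

namespace IsBellmanFixedPoint

variable {t₀ κ : ℝ} {M Q V : ℝ → ℝ}

theorem le_of_lt (hV : IsBellmanFixedPoint t₀ M Q V) (hQ : BddAbove (Q '' Iio t₀))
    {a z : ℝ} (haz : a < z) (hat : a < t₀) : Q a ≤ V z := by
  rw [hV z]
  split_ifs with hz
  · exact le_max_of_le_right
      (le_csSup (hQ.mono (image_mono fun _ h => h.2)) ⟨a, ⟨haz, hat⟩, rfl⟩)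
  · exact le_csSup hQ ⟨a, hat, rfl⟩

theorem le_add_of_lt (hV : IsBellmanFixedPoint t₀ M Q V) (hQ : BddAbove (Q '' Iio t₀))
    (hMQ : ∀ s, M s = Q s + κ) (hκ : 0 ≤ κ) {y z : ℝ} (hyz : y < z) :
    V y ≤ V z + κ := by
  have hQ_le {a : ℝ} (hay : a < y) (hat : a < t₀) : Q a ≤ V z + κ := by
    linarith [hV.le_of_lt hQ (hay.trans hyz) hat]
  rw [hV y]
  split_ifs with hy
  · refine max_le ?_ (csSup_le ((setOf_lt_and_lt_nonempty y t₀).image Q) ?_)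
    · linarith [hMQ y, hV.le_of_lt hQ hyz hy]
    · rintro _ ⟨a, ⟨hay, hat⟩, rfl⟩
      exact hQ_le hay hat
  · refine csSup_le ⟨Q (t₀ - 1), _, by simp, rfl⟩ ?_
    rintro _ ⟨a, hat, rfl⟩
    exact hQ_le (hat.trans_le (not_lt.mp hy)) hat

theorem eq_of_forall_lt_le (hV : IsBellmanFixedPoint t₀ M Q V) {s : ℝ} (hs : s < t₀)
    (hmerge : ∀ a < s, Q a ≤ M s) : V s = M s := by
  rw [hV s, if_pos hs]
  refine max_eq_left (csSup_le ((setOf_lt_and_lt_nonempty s t₀).image Q) ?_)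
  rintro _ ⟨a, ⟨has, -⟩, rfl⟩
  exact hmerge a has

end IsBellmanFixedPoint

theorem stmt_15_general
    (cN t₀ : ℝ) (G : ℝ → ℝ)
    (hcN : cN < 0) (ht₀ : 0 < t₀)
    (hGinc : StrictMonoOn G (Iic cN))
    (hGdec : StrictAntiOn G (Ico cN t₀))
    (hG0 : 0 < G 0)
    (f : ℝ → ℝ) (γ : ℝ)
    (hfnn : ∀ x, 0 ≤ f x)
    (hf1 : (∫ x in Ioi (0:ℝ), f x) = 1) (hγ : γ ∈ Ioo (0:ℝ) 1)
    (V : ℝ → ℝ) (hVm : Measurable V)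
    (hVub : BddAbove (range V))
    (hVlb : ∀ r : ℝ, BddBelow (V '' Ici r))
    (hfix : ∀ s, V s = if s < t₀
      then max (G s + γ * ∫ x in Ioi (0:ℝ), f x * V (s + x))
        (sSup ((fun a => (G a - G 0) + γ * ∫ x in Ioi (0:ℝ), f x * V (a + x)) ''
          {a | a < s ∧ a < t₀}))
      else sSup ((fun a => (G a - G 0) + γ * ∫ x in Ioi (0:ℝ), f x * V (a + x)) '' Iio t₀)) :
    ∀ s, s < cN →
      V s = G s + γ * ∫ x in Ioi (0:ℝ), f x * V (s + x) ∧
      ∀ a, a < s →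
        (G a - G 0) + (γ * ∫ x in Ioi (0:ℝ), f x * V (a + x)) <
          G s + γ * ∫ x in Ioi (0:ℝ), f x * V (s + x) := by
  obtain ⟨hγ0, hγ1⟩ := hγ
  set I : ℝ → ℝ := fun c => ∫ x in Ioi (0:ℝ), f x * V (c + x)
  have hfi : IntegrableOn f (Ioi 0) := Integrable.of_integral_ne_zero (by simp [hf1])
  have hf0 : ∀ᵐ x ∂(volume.restrict (Ioi 0)), 0 ≤ f x := ae_of_all _ hfnn
  have hVint (c : ℝ) : IntegrableOn (fun x => f x * V (c + x)) (Ioi 0) :=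
    integrableOn_Ioi_mul_comp_const_add hfi hVm (hVub.mono (image_subset_range V _)) (hVlb c)
  obtain ⟨S, hS⟩ := hVub
  have hIS (c : ℝ) : I c ≤ S := by
    simpa using integral_mul_le_integral_mul_add (v := fun _ => 0) hfi hf1 hf0 (hVint c)
      (by simp) (ae_of_all _ fun x => by simpa using hS ⟨c + x, rfl⟩)
  have hQ : BddAbove ((fun a => G a - G 0 + γ * I a) '' Iio t₀) := by
    refine ⟨G cN - G 0 + γ * S, ?_⟩
    rintro _ ⟨a, ha, rfl⟩
    linarith [le_of_strictMonoOn_Iic_of_strictAntiOn_Ico hGinc hGdec (hcN.trans ht₀) ha,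
      mul_le_mul_of_nonneg_left (hIS a) hγ0.le]
  have hV : IsBellmanFixedPoint t₀ (fun s => G s + γ * I s) (fun a => G a - G 0 + γ * I a) V :=
    hfix
  intro s hs
  have hlt (a : ℝ) (ha : a < s) : G a - G 0 + γ * I a < G s + γ * I s := by
    have hIas : I a ≤ I s + G 0 :=
      integral_mul_le_integral_mul_add hfi hf1 hf0 (hVint a) (hVint s) (ae_of_all _ fun x =>
        hV.le_add_of_lt hQ (fun _ => by ring) hG0.le (add_lt_add_left ha x))
    have hGas : G a < G s := hGinc (ha.trans hs).le hs.le ha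
    linarith [mul_le_mul_of_nonneg_left hIas hγ0.le, mul_lt_of_lt_one_left hG0 hγ1]
  exact ⟨hV.eq_of_forall_lt_le (by linarith) fun a ha => (hlt a ha).le, hlt⟩

theorem stmt_15
    (cN t₀ : ℝ) (G : ℝ → ℝ)
    (hcN : cN < 0) (ht₀ : 0 < t₀)
    (hGcont : ContinuousOn G (Iio t₀))
    (hGinc : StrictMonoOn G (Iic cN))
    (hGdec : StrictAntiOn G (Ico cN t₀))
    (hGtop : Tendsto G (nhdsWithin t₀ (Iio t₀)) atBot)
    (hGbot : Tendsto G atBot atBot)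
    (hG0 : 0 < G 0)
    (f : ℝ → ℝ) (γ : ℝ)
    (hfm : Measurable f) (hf0 : ∀ x ≤ 0, f x = 0) (hfnn : ∀ x, 0 ≤ f x)
    (hf1 : (∫ x in Ioi (0:ℝ), f x) = 1) (hγ : γ ∈ Ioo (0:ℝ) 1)
    (V : ℝ → ℝ) (hVm : Measurable V)
    (hVub : BddAbove (range V))
    (hVlb : ∀ r : ℝ, BddBelow (V '' Ici r))
    (hfix : ∀ s, V s = if s < t₀
      then max (G s + γ * ∫ x in Ioi (0:ℝ), f x * V (s + x))
        (sSup ((fun a => (G a - G 0) + γ * ∫ x in Ioi (0:ℝ), f x * V (a + x)) ''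
          {a | a < s ∧ a < t₀}))
      else sSup ((fun a => (G a - G 0) + γ * ∫ x in Ioi (0:ℝ), f x * V (a + x)) '' Iio t₀)) :
    ∀ s, s < cN →
      V s = G s + γ * ∫ x in Ioi (0:ℝ), f x * V (s + x) ∧
      ∀ a, a < s →
        (G a - G 0) + (γ * ∫ x in Ioi (0:ℝ), f x * V (a + x)) <
          G s + γ * ∫ x in Ioi (0:ℝ), f x * V (s + x) :=
  stmt_15_general cN t₀ G hcN ht₀ hGinc hGdec hG0 f γ hfnn hf1 hγ V hVm hVub hVlb hfix
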